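/- Let n ≥ 2, let F be the n×n matrix with F_{i,i+1} = 1 for i = 1,…,n−1 and all other entries 0, and let D be an n×n diagonal matrix with diagonal vector d := D𝟏, d_av := 𝟏^T d / n, and d_av2 := 𝟏^T D² 𝟏 / n. For a permutation matrix P write D_P := P^T D P. Then the average over all n! permutation matrices P satisfies (1/n!)·∑_{P} P (I − 𝟏 e₁^T) D_P (−2I + F + F^T) D_P (I − e₁ 𝟏^T) P^T = −2·(1 + 1/n)·D² + (2/n)·d d^T − (d_av/(n−1))·( 𝟏 d^T + d 𝟏^T ) + ((2n−1)/(n(n−1)))·( 𝟏𝟏^T D² + D² 𝟏𝟏^T ) − 2·d_av2·𝟏𝟏^T. -/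

import Mathlib

/-!
Conjugating a summand by `P` only renames indices: `P (Pᵀ D P) Pᵀ = D`, the distinguished index `0`
becomes `k = σ 0`, and `B = -2I + F + Fᵀ` becomes `B_σ = P B Pᵀ`. So the `(i, j)` entry of a summand
is `d i d j B_σ i j - d i d k B_σ i k - d k d j B_σ k j + d k² B_σ k k`. Every term depends on `σ`
only through `(σ⁻¹ i, σ⁻¹ j)` or, after expanding the row `B 0 = -2 e₀ + e₁`, through `(σ 0, σ 1)`.
As the symmetric group is 2-transitive, summing a function of `(σ a, σ b)`, `a ≠ b`, over all `σ`
gives `(n - 2)!` times its sum over ordered pairs of distinct points (and likewise for one point).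
What remains is counting the `n - 1` adjacent pairs of the path.
-/
open Matrix

/-- The matrix with ones on the superdiagonal. -/
def matF (n : ℕ) : Matrix (Fin n) (Fin n) ℝ :=
  Matrix.of fun i j => if (i : ℕ) + 1 = (j : ℕ) then 1 else 0

/-- The permutation matrix `P` of `σ`, satisfying `P e_j = e_{σ j}`. -/
def permMat {n : ℕ} (σ : Equiv.Perm (Fin n)) : Matrix (Fin n) (Fin n) ℝ :=
  Matrix.of fun i j => if i = σ j then 1 else 0

open Equiv Finset
open scoped Nat

namespace Equiv.Perm

variable {α M : Type*} [Fintype α] [DecidableEq α] [AddCommMonoid M]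

theorem sum_apply_eq_sum_apply (g : α → M) (a b : α) :
    ∑ σ : Perm α, g (σ a) = ∑ σ : Perm α, g (σ b) := by
  rw [← Equiv.sum_comp (Equiv.mulRight (swap a b))]
  simp [mul_apply]

theorem card_smul_sum_apply (g : α → M) (a : α) :
    Fintype.card α • ∑ σ : Perm α, g (σ a) = (Fintype.card α)! • ∑ x, g x := by
  calc Fintype.card α • ∑ σ : Perm α, g (σ a)
      = ∑ b : α, ∑ σ : Perm α, g (σ b) := by
        simp [sum_apply_eq_sum_apply g _ a]
    _ = ∑ σ : Perm α, ∑ x, g x := by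
        rw [Finset.sum_comm]
        exact Finset.sum_congr rfl fun σ _ => Equiv.sum_comp σ g
    _ = (Fintype.card α)! • ∑ x, g x := by simp [Fintype.card_perm]

theorem sum_apply_apply_eq_sum_apply_apply (g : α → α → M) {a b a' b' : α}
    (hab : a ≠ b) (hab' : a' ≠ b') :
    ∑ σ : Perm α, g (σ a) (σ b) = ∑ σ : Perm α, g (σ a') (σ b') := by
  obtain ⟨τ, hτa, hτb⟩ :=
    MulAction.is_two_pretransitive_iff.mp (isMultiplyPretransitive α 2) hab' hab
  rw [Perm.smul_def] at hτa hτb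
  rw [← Equiv.sum_comp (Equiv.mulRight τ) fun σ => g (σ a') (σ b')]
  simp only [coe_mulRight, mul_apply, hτa, hτb]

theorem card_mul_smul_sum_apply_apply (g : α → α → M) {a b : α} (hab : a ≠ b) :
    (Fintype.card α * (Fintype.card α - 1)) • ∑ σ : Perm α, g (σ a) (σ b)
      = (Fintype.card α)! • ∑ x, ∑ y ∈ univ.erase x, g x y := by
  calc (Fintype.card α * (Fintype.card α - 1)) • ∑ σ : Perm α, g (σ a) (σ b)
      = ∑ x, ∑ y ∈ univ.erase x, ∑ σ : Perm α, g (σ x) (σ y) := by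
        refine .symm <| (Finset.sum_congr rfl fun x _ => Finset.sum_congr rfl fun y hy =>
          sum_apply_apply_eq_sum_apply_apply g (Finset.ne_of_mem_erase hy).symm hab).trans ?_
        simp [Finset.card_erase_of_mem, mul_smul]
    _ = ∑ σ : Perm α, ∑ x, ∑ y ∈ univ.erase x, g x y := by
        simp_rw [Finset.sum_comm (s := univ.erase _) (t := (univ : Finset (Perm α)))]
        rw [Finset.sum_comm]
        refine Finset.sum_congr rfl fun σ _ => ?_
        rw [← Equiv.sum_comp σ fun x => ∑ y ∈ univ.erase x, g x y]
        exact Finset.sum_congr rfl fun x _ => Finset.sum_equiv σ (by simp) (by simp)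
    _ = (Fintype.card α)! • ∑ x, ∑ y ∈ univ.erase x, g x y := by simp [Fintype.card_perm]

theorem sum_apply_eq_factorial_smul [IsAddTorsionFree M] (g : α → M) (a : α) :
    ∑ σ : Perm α, g (σ a) = (Fintype.card α - 1)! • ∑ x, g x := by
  have hcard : Fintype.card α ≠ 0 := (Fintype.card_pos_iff.mpr ⟨a⟩).ne'
  apply nsmul_right_injective hcard
  simp only [card_smul_sum_apply, smul_smul, Nat.mul_factorial_pred hcard]

theorem sum_apply_apply_eq_factorial_smul [IsAddTorsionFree M] (g : α → α → M) {a b : α}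
    (hab : a ≠ b) :
    ∑ σ : Perm α, g (σ a) (σ b) = (Fintype.card α - 2)! • ∑ x, ∑ y ∈ univ.erase x, g x y := by
  have hcard : 1 < Fintype.card α := Fintype.one_lt_card_iff_nontrivial.mpr ⟨⟨a, b, hab⟩⟩
  apply nsmul_right_injective (mul_ne_zero (by omega) (by omega) :
    Fintype.card α * (Fintype.card α - 1) ≠ 0)
  simp only [card_mul_smul_sum_apply_apply g hab, smul_smul, mul_assoc]
  rw [show Fintype.card α - 2 = Fintype.card α - 1 - 1 by omega,
    Nat.mul_factorial_pred (by omega), Nat.mul_factorial_pred (by omega)]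

end Equiv.Perm

theorem one_sub_vecMulVec_mul_mul_apply {ι R : Type*} [Fintype ι] [DecidableEq ι] [Ring R]
    (k : ι) (X : Matrix ι ι R) (i j : ι) :
    (((1 : Matrix ι ι R) - vecMulVec (fun _ => 1) (Pi.single k 1)) * X
        * (1 - vecMulVec (Pi.single k 1) (fun _ => 1)) : Matrix ι ι R) i j
      = X i j - X i k - X k j + X k k := by
  simp only [Matrix.mul_apply, Matrix.sub_apply, one_apply, vecMulVec_apply, Pi.single_apply,
    sub_mul, mul_sub, one_mul, mul_one, mul_ite, ite_mul, mul_zero, zero_mul, sum_sub_distrib,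
    sum_ite_eq', mem_univ, if_true]
  abel

namespace permMat

variable {n : ℕ}

theorem eq_toMatrix (σ : Perm (Fin n)) : permMat σ = σ.symm.toPEquiv.toMatrix := by
  ext i j
  simp [permMat, PEquiv.toMatrix_apply, eq_symm_apply, eq_comm]

theorem mul_mul_transpose (σ : Perm (Fin n)) (M : Matrix (Fin n) (Fin n) ℝ) :
    permMat σ * M * (permMat σ)ᵀ = M.submatrix σ.symm σ.symm := by
  rw [eq_toMatrix, ← PEquiv.toMatrix_symm, ← Equiv.toPEquiv_symm, symm_symm,
    PEquiv.toMatrix_toPEquiv_mul, PEquiv.mul_toMatrix_toPEquiv]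
  rfl

theorem mul_one_sub_vecMulVec_mul_transpose (σ : Perm (Fin n)) (u v : Fin n → ℝ) :
    permMat σ * (1 - vecMulVec u v) * (permMat σ)ᵀ = 1 - vecMulVec (u ∘ σ.symm) (v ∘ σ.symm) := by
  rw [mul_mul_transpose]
  ext i j
  simp [one_apply, vecMulVec_apply]

theorem mul_sandwich_mul_transpose (σ : Perm (Fin n)) (k : Fin n) (d : Fin n → ℝ)
    (B : Matrix (Fin n) (Fin n) ℝ) :
    permMat σ * ((1 : Matrix (Fin n) (Fin n) ℝ) - vecMulVec (fun _ => 1) (Pi.single k 1))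
        * ((permMat σ)ᵀ * diagonal d * permMat σ) * B * ((permMat σ)ᵀ * diagonal d * permMat σ)
        * (1 - vecMulVec (Pi.single k 1) (fun _ => 1)) * (permMat σ)ᵀ
      = (1 - vecMulVec (fun _ => 1) (Pi.single (σ k) 1))
        * (diagonal d * B.submatrix σ.symm σ.symm * diagonal d)
        * (1 - vecMulVec (Pi.single (σ k) 1) (fun _ => 1)) := by
  have hU : permMat σ * (1 - vecMulVec (fun _ => 1) (Pi.single k 1)) * (permMat σ)ᵀ
      = 1 - vecMulVec (fun _ => 1) (Pi.single (σ k) 1) := by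
    rw [mul_one_sub_vecMulVec_mul_transpose, Pi.single_comp_equiv, symm_symm]
    rfl
  have hV : permMat σ * (1 - vecMulVec (Pi.single k 1) (fun _ => 1)) * (permMat σ)ᵀ
      = 1 - vecMulVec (Pi.single (σ k) 1) (fun _ => 1) := by
    rw [mul_one_sub_vecMulVec_mul_transpose, Pi.single_comp_equiv, symm_symm]
    rfl
  rw [← hU, ← hV, ← mul_mul_transpose]
  simp only [Matrix.mul_assoc]

end permMat

def secondDiff (n : ℕ) : Matrix (Fin n) (Fin n) ℝ :=
  (-2 : ℝ) • (1 : Matrix (Fin n) (Fin n) ℝ) + matF n + (matF n)ᵀ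

namespace secondDiff

variable {n : ℕ}

theorem isSymm : (secondDiff n).IsSymm := by
  simp only [IsSymm, secondDiff, transpose_add, transpose_smul, transpose_one, transpose_transpose]
  abel

theorem apply_self (k : Fin n) : secondDiff n k k = -2 := by
  simp [secondDiff, matF]

theorem apply_of_ne {k l : Fin n} (h : k ≠ l) : secondDiff n k l = matF n k l + matF n l k := by
  simp [secondDiff, h]

theorem zero_apply {N : ℕ} (l : Fin (N + 2)) :
    secondDiff (N + 2) 0 l = (if l = 0 then -2 else 0) + if l = 1 then 1 else 0 := by
  rcases l with ⟨_ | _ | l, hl⟩ <;>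
    simp [secondDiff, matF, one_apply, Fin.ext_iff]

end secondDiff

theorem sum_sum_matF (n : ℕ) : ∑ i, ∑ j, matF n i j = (n - 1 : ℕ) := by
  cases n with
  | zero => simp
  | succ m =>
    have hrow (i : Fin m) : ∑ j, matF (m + 1) i.castSucc j = 1 := by
      have hsucc (j : Fin (m + 1)) : (i.castSucc : ℕ) + 1 = j ↔ i.succ = j := by simp [Fin.ext_iff]
      simp only [matF, of_apply, hsucc, sum_ite_eq, mem_univ, if_true]
    have hlast : ∑ j, matF (m + 1) (Fin.last m) j = 0 :=
      Finset.sum_eq_zero fun j _ => if_neg (by rw [Fin.val_last]; omega)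
    simp [Fin.sum_univ_castSucc (fun i => ∑ j, matF (m + 1) i j), hrow, hlast]

theorem sum_sum_erase_secondDiff (n : ℕ) :
    ∑ x, ∑ y ∈ univ.erase x, secondDiff n x y = 2 * (n - 1 : ℕ) := by
  have hrow (x : Fin n) :
      ∑ y ∈ univ.erase x, secondDiff n x y = ∑ y, (matF n x y + matF n y x) := by
    rw [← Finset.sum_erase univ (f := fun y => matF n x y + matF n y x) (a := x) (by simp [matF])]
    exact Finset.sum_congr rfl fun y hy => secondDiff.apply_of_ne (ne_of_mem_erase hy).symm
  simp only [hrow, Finset.sum_add_distrib]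
  rw [Finset.sum_comm (f := fun x y => matF n y x), sum_sum_matF]
  ring

theorem sum_perm_secondDiff_symm_apply {n : ℕ} (i j : Fin n) :
    ∑ σ : Perm (Fin n), secondDiff n (σ.symm i) (σ.symm j)
      = if i = j then -2 * (n ! : ℝ) else 2 * ((n - 1)! : ℝ) := by
  rw [← Equiv.sum_comp (Equiv.inv _) fun σ : Perm (Fin n) => secondDiff n (σ.symm i) (σ.symm j)]
  simp only [Equiv.inv_apply, Perm.inv_def, symm_symm]
  split_ifs with hij
  · simp [hij, secondDiff.apply_self, Fintype.card_perm, mul_comm]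
  · rw [Perm.sum_apply_apply_eq_factorial_smul (fun x y => secondDiff n x y) hij,
      sum_sum_erase_secondDiff, nsmul_eq_mul, Fintype.card_fin]
    have hn : 1 < n := by simpa using Fintype.one_lt_card_iff_nontrivial.mpr ⟨⟨i, j, hij⟩⟩
    rw [show n - 2 = n - 1 - 1 by omega, ← Nat.mul_factorial_pred (n := n - 1) (by omega)]
    push_cast
    ring

theorem sum_perm_mul_secondDiff_zero_symm_apply {N : ℕ} (d : Fin (N + 2) → ℝ) (j : Fin (N + 2)) :
    ∑ σ : Perm (Fin (N + 2)), d (σ 0) * secondDiff (N + 2) 0 (σ.symm j)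
      = -2 * (N + 1)! * d j + N ! * (∑ x, d x - d j) := by
  simp only [secondDiff.zero_apply, symm_apply_eq, mul_add, Finset.sum_add_distrib]
  rw [Perm.sum_apply_eq_factorial_smul (fun x => d x * if j = x then -2 else 0) 0,
    Perm.sum_apply_apply_eq_factorial_smul (fun x y => d x * if j = y then 1 else 0) zero_ne_one]
  have hfirst : ∑ x, d x * (if j = x then -2 else 0) = -2 * d j := by simp [mul_comm]
  have hsecond : ∑ x, ∑ y ∈ univ.erase x, d x * (if j = y then 1 else 0) = ∑ x, d x - d j := by
    simp [Finset.sum_ite, Finset.filter_ne, Finset.sum_erase_eq_sub]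
  rw [hfirst, hsecond, nsmul_eq_mul, nsmul_eq_mul, Fintype.card_fin]
  push_cast
  ring

theorem sum_perm_sandwich_secondDiff_apply {N : ℕ} (d : Fin (N + 2) → ℝ) (i j : Fin (N + 2)) :
    ∑ σ : Perm (Fin (N + 2)),
        (d i * secondDiff (N + 2) (σ.symm i) (σ.symm j) * d j
          - d i * secondDiff (N + 2) (σ.symm i) 0 * d (σ 0)
          - d (σ 0) * secondDiff (N + 2) 0 (σ.symm j) * d j
          + d (σ 0) * secondDiff (N + 2) 0 0 * d (σ 0))
      = d i * d j * (if i = j then -2 * ((N + 2)! : ℝ) else 2 * ((N + 1)! : ℝ))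
        - d i * (-2 * (N + 1)! * d i + N ! * (∑ x, d x - d i))
        - d j * (-2 * (N + 1)! * d j + N ! * (∑ x, d x - d j))
        - 2 * ((N + 1)! * ∑ x, d x ^ 2) := by
  have hterm (σ : Perm (Fin (N + 2))) :
      d i * secondDiff (N + 2) (σ.symm i) (σ.symm j) * d j
          - d i * secondDiff (N + 2) (σ.symm i) 0 * d (σ 0)
          - d (σ 0) * secondDiff (N + 2) 0 (σ.symm j) * d j
          + d (σ 0) * secondDiff (N + 2) 0 0 * d (σ 0)
        = d i * d j * secondDiff (N + 2) (σ.symm i) (σ.symm j)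
          - d i * (d (σ 0) * secondDiff (N + 2) 0 (σ.symm i))
          - d j * (d (σ 0) * secondDiff (N + 2) 0 (σ.symm j))
          - 2 * d (σ 0) ^ 2 := by
    rw [secondDiff.isSymm.apply 0 (σ.symm i), secondDiff.apply_self]
    ring
  simp only [hterm, Finset.sum_sub_distrib, ← Finset.mul_sum, sum_perm_secondDiff_symm_apply,
    sum_perm_mul_secondDiff_zero_symm_apply, Perm.sum_apply_eq_factorial_smul (fun x => d x ^ 2) 0]
  simp [nsmul_eq_mul]

theorem average_epsD_quadratic_term (n : ℕ) (hn : 2 ≤ n) (d : Fin n → ℝ)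
    (dav dav2 : ℝ) (hdav : dav = (∑ i, d i) / n) (hdav2 : dav2 = (∑ i, (d i) ^ 2) / n) :
    ((n.factorial : ℝ))⁻¹ •
        ∑ σ : Equiv.Perm (Fin n),
          permMat σ *
            ((1 : Matrix (Fin n) (Fin n) ℝ)
              - Matrix.vecMulVec (fun _ => 1) (Pi.single (⟨0, by omega⟩ : Fin n) 1)) *
            ((permMat σ)ᵀ * Matrix.diagonal d * permMat σ) *
            ((-2 : ℝ) • (1 : Matrix (Fin n) (Fin n) ℝ) + matF n + (matF n)ᵀ) *
            ((permMat σ)ᵀ * Matrix.diagonal d * permMat σ) *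
            ((1 : Matrix (Fin n) (Fin n) ℝ)
              - Matrix.vecMulVec (Pi.single (⟨0, by omega⟩ : Fin n) 1) (fun _ => 1)) *
            (permMat σ)ᵀ
      = (-2 * (1 + 1 / (n : ℝ))) • (Matrix.diagonal d ^ 2)
        + (2 / (n : ℝ)) • Matrix.vecMulVec d d
        - (dav / ((n : ℝ) - 1)) •
            (Matrix.vecMulVec (fun _ => 1) d + Matrix.vecMulVec d (fun _ => 1))
        + ((2 * (n : ℝ) - 1) / ((n : ℝ) * ((n : ℝ) - 1))) •
            (Matrix.vecMulVec (fun _ => 1) (fun _ => 1) * (Matrix.diagonal d ^ 2)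
              + (Matrix.diagonal d ^ 2) * Matrix.vecMulVec (fun _ => 1) (fun _ => 1))
        - (2 * dav2) • Matrix.vecMulVec (fun _ => 1) (fun _ => 1) := by
  obtain ⟨N, rfl⟩ : ∃ N, n = N + 2 := ⟨n - 2, by omega⟩
  subst hdav hdav2
  have hB : (-2 : ℝ) • (1 : Matrix (Fin (N + 2)) (Fin (N + 2)) ℝ) + matF (N + 2) + (matF (N + 2))ᵀ
      = secondDiff (N + 2) := rfl
  simp only [hB, permMat.mul_sandwich_mul_transpose, Fin.zero_eta]
  ext i j
  simp only [Matrix.smul_apply, Matrix.sum_apply, one_sub_vecMulVec_mul_mul_apply, diagonal_mul,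
    mul_diagonal, submatrix_apply, symm_apply_apply]
  rw [sum_perm_sandwich_secondDiff_apply]
  simp only [Matrix.add_apply, Matrix.sub_apply, Matrix.smul_apply, smul_eq_mul, vecMulVec_apply,
    sq (diagonal d), diagonal_mul_diagonal, mul_diagonal, diagonal_mul, diagonal_apply,
    Nat.factorial_succ]
  push_cast
  rw [show (N : ℝ) + 2 - 1 = N + 1 by ring]
  split_ifs with hij
  · subst hij
    field_simp
    ring
  · field_simp
    ring
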